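/- Let κ > 1 be an integer, let A=(a_{ij}) be an m×n integer matrix with columns a_1,…,a_n ∈ ℤ^m, let w_1,…,w_n ∈ ℂ, and let X = {x=(ξ_1,…,ξ_n) ∈ (ℤ/κℤ)^n : ∑_{j=1}^n a_{ij}ξ_j ≡ 0 (mod κ) for i=1,…,m}. Define q(z_1,…,z_m) = ∏_{j=1}^n (1 + w_j z^{a_j} + w_j z^{2a_j} + ⋯ + w_j z^{(κ−1)a_j}) on 𝕋^m, and let μ be the product over i=1,…,m of the uniform probability measures on the κ-th roots of unity in the i-th circle factor. Then ∫_{𝕋^m} q dμ = w(X). -/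

import Mathlib

/-!
Expanding the product, `q` is the sum over `ξ ∈ (ℤ/κℤ)ⁿ` of `w(ξ) z^{∑ⱼ ξⱼ aⱼ}`: from the
`j`-th factor pick the term `z^{t aⱼ}` with `t = ξⱼ`, whose coefficient is `1` for `t = 0` and
`wⱼ` otherwise. The measure is a product, so the integral of a monomial `z^v` factors into
the one-variable integrals of `zᵢ^{vᵢ}`, and averaging `ζ^{t vᵢ}` over the `κ`-th roots of
unity `ζ^t` gives `1` if `κ ∣ vᵢ` and `0` otherwise. So exactly the `ξ ∈ X` survive.
-/

open MeasureTheory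

noncomputable instance : MeasurableSpace Circle := Subtype.instMeasurableSpace

/-- The uniform probability measure on the `κ`-th roots of unity in the unit circle. -/
noncomputable def rootsOfUnityMeasure (κ : ℕ) : Measure Circle :=
  (κ : ENNReal)⁻¹ • ∑ t ∈ Finset.range κ, Measure.dirac (Circle.exp (2 * Real.pi * t / κ))

open Finset Complex Real

instance : MeasurableSingletonClass Circle := Subtype.instMeasurableSingletonClass

instance (κ : ℕ) [NeZero κ] : IsProbabilityMeasure (rootsOfUnityMeasure κ) := by
  constructor
  simp [rootsOfUnityMeasure, ENNReal.inv_mul_cancel, NeZero.ne κ]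

lemma integrable_rootsOfUnityMeasure {E : Type*} [NormedAddCommGroup E] (κ : ℕ) [NeZero κ]
    (f : Circle → E) : Integrable f (rootsOfUnityMeasure κ) :=
  (integrable_finsetSum_measure.mpr fun _ _ => integrable_dirac enorm_lt_top).smul_measure
    (ENNReal.inv_ne_top.mpr (by simp [NeZero.ne κ]))

lemma integral_rootsOfUnityMeasure {E : Type*} [NormedAddCommGroup E] [NormedSpace ℝ E]
    [CompleteSpace E] (κ : ℕ) (f : Circle → E) :
    ∫ z, f z ∂rootsOfUnityMeasure κ
      = (κ : ℝ)⁻¹ • ∑ t ∈ range κ, f (Circle.exp (2 * π * t / κ)) := by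
  rw [rootsOfUnityMeasure, integral_smul_measure,
    integral_finsetSum_measure fun _ _ => integrable_dirac enorm_lt_top]
  simp

lemma coe_circleExp_eq_pow (κ t : ℕ) :
    (Circle.exp (2 * π * t / κ) : ℂ) = exp (2 * π * I / κ) ^ t := by
  rw [Circle.coe_exp, ← Complex.exp_nat_mul]
  push_cast
  ring_nf

lemma IsPrimitiveRoot.sum_range_pow_zpow {K : Type*} [Field K] {ζ : K} {k : ℕ}
    (hζ : IsPrimitiveRoot ζ k) (e : ℤ) :
    ∑ t ∈ range k, (ζ ^ t) ^ e = if (k : ℤ) ∣ e then (k : K) else 0 := by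
  have hpow : ∀ t : ℕ, (ζ ^ t) ^ e = (ζ ^ e) ^ t := fun t => by
    rw [← zpow_natCast, ← zpow_natCast, ← zpow_mul, ← zpow_mul, mul_comm]
  simp_rw [hpow]
  split_ifs with hdvd
  · simp [(hζ.zpow_eq_one_iff_dvd e).mpr hdvd]
  · have hne : ζ ^ e ≠ 1 := mt (hζ.zpow_eq_one_iff_dvd e).mp hdvd
    have hk : (ζ ^ e) ^ k = 1 := by
      rw [← zpow_natCast, ← zpow_mul, mul_comm, zpow_mul, zpow_natCast, hζ.pow_eq_one, one_zpow]
    rw [geom_sum_eq hne, hk, sub_self, zero_div]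

lemma integral_zpow_rootsOfUnityMeasure (κ : ℕ) [NeZero κ] (e : ℤ) :
    ∫ z, (z : ℂ) ^ e ∂rootsOfUnityMeasure κ = if (κ : ℤ) ∣ e then 1 else 0 := by
  simp_rw [integral_rootsOfUnityMeasure, coe_circleExp_eq_pow,
    (isPrimitiveRoot_exp κ (NeZero.ne κ)).sum_range_pow_zpow]
  split_ifs <;> simp [NeZero.ne κ]

lemma integral_prod_zpow_pi_rootsOfUnityMeasure {ι : Type*} [Fintype ι] (κ : ℕ) [NeZero κ]
    (v : ι → ℤ) :
    ∫ z : ι → Circle, ∏ i, (z i : ℂ) ^ v i ∂(Measure.pi fun _ => rootsOfUnityMeasure κ)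
      = if ∀ i, (κ : ℤ) ∣ v i then 1 else 0 := by
  rw [integral_fintype_prod_eq_prod (fun i (x : Circle) => (x : ℂ) ^ v i)]
  simp_rw [integral_zpow_rootsOfUnityMeasure, Fintype.prod_boole]

lemma integrable_prod_zpow_pi_rootsOfUnityMeasure {ι : Type*} [Fintype ι] (κ : ℕ) [NeZero κ]
    (v : ι → ℤ) :
    Integrable (fun z : ι → Circle => ∏ i, (z i : ℂ) ^ v i)
      (Measure.pi fun _ => rootsOfUnityMeasure κ) :=
  Integrable.fintype_prod (f := fun i (x : Circle) => (x : ℂ) ^ v i) fun _ =>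
    integrable_rootsOfUnityMeasure κ _

lemma zpow_sum_eq_prod_zpow {G₀ ι : Type*} [CommGroupWithZero G₀] {x : G₀} (hx : x ≠ 0)
    (s : Finset ι) (e : ι → ℤ) : x ^ (∑ i ∈ s, e i) = ∏ i ∈ s, x ^ e i := by
  classical
  induction s using Finset.induction with
  | empty => simp
  | insert i s hi ih => rw [sum_insert hi, prod_insert hi, zpow_add₀ hx, ih]

lemma add_sum_Icc_eq_sum_fin {R : Type*} [CommSemiring R] {κ : ℕ} (hκ : 0 < κ) (c : R)
    (f : ℕ → R) :
    f 0 + ∑ t ∈ Icc 1 (κ - 1), c * f t = ∑ t : Fin κ, (if (t : ℕ) = 0 then 1 else c) * f t := by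
  have hrange : range κ = insert 0 (Icc 1 (κ - 1)) := by
    ext t
    simp only [mem_range, mem_insert, mem_Icc]
    omega
  rw [Fin.sum_univ_eq_sum_range (fun t => (if t = 0 then 1 else c) * f t), hrange,
    sum_insert (by simp), if_pos rfl, one_mul]
  refine congrArg _ (sum_congr rfl fun t ht => ?_)
  rw [if_neg (by simp only [mem_Icc] at ht; omega)]

lemma prod_one_add_sum_Icc_eq_sum {K ι J : Type*} [Field K] [Fintype ι] [Fintype J]
    [DecidableEq J] {κ : ℕ} (hκ : 0 < κ) (a : ι → J → ℤ) (w : J → K) (z : ι → K)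
    (hz : ∀ i, z i ≠ 0) :
    ∏ j, (1 + ∑ t ∈ Icc 1 (κ - 1), w j * ∏ i, z i ^ ((t : ℤ) * a i j))
      = ∑ ξ : J → Fin κ, (∏ j ∈ univ.filter (fun j => (ξ j : ℕ) ≠ 0), w j)
          * ∏ i, z i ^ (∑ j, a i j * ((ξ j : ℕ) : ℤ)) := by
  have hfactor : ∀ j, 1 + ∑ t ∈ Icc 1 (κ - 1), w j * ∏ i, z i ^ ((t : ℤ) * a i j)
      = ∑ t : Fin κ, (if (t : ℕ) = 0 then 1 else w j) * ∏ i, z i ^ (((t : ℕ) : ℤ) * a i j) :=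
    fun j => by simpa using add_sum_Icc_eq_sum_fin hκ (w j) fun t => ∏ i, z i ^ ((t : ℤ) * a i j)
  rw [prod_congr rfl fun j _ => hfactor j, prod_univ_sum, Fintype.piFinset_univ]
  refine sum_congr rfl fun ξ _ => ?_
  rw [prod_mul_distrib, prod_filter, prod_comm]
  congr 1
  · exact prod_congr rfl fun j _ => by split_ifs <;> simp_all
  · refine prod_congr rfl fun i _ => ?_
    simp_rw [zpow_sum_eq_prod_zpow (hz i), mul_comm]

/-- The analogue of Lemma 4.1 used in the proof of Theorem 1.6.  Let `κ > 1`, let `A` be an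
`m × n` integer matrix with columns `a_1, …, a_n ∈ ℤ^m`, let
`X = {ξ ∈ (ℤ/κℤ)ⁿ : ∑_j a_{ij} ξ_j ≡ 0 (mod κ)}` (with `ℤ/κℤ` identified with
`{0, …, κ−1}`, here encoded by `Fin κ`), and let
`q(z) = ∏_j (1 + w_j z^{a_j} + w_j z^{2a_j} + ⋯ + w_j z^{(κ−1)a_j})`.  Then the integral of
`q` against the product over the `m` circle factors of the uniform probability measures on
the `κ`-th roots of unity equals `w(X) = ∑_{ξ ∈ X} ∏_{j : ξ_j ≠ 0} w_j`. -/
theorem stmt9 (κ : ℕ) (hκ : 1 < κ) (m n : ℕ) (a : Fin m → Fin n → ℤ) (w : Fin n → ℂ) :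
    (∫ z : Fin m → Circle,
        ∏ j, (1 + ∑ t ∈ Finset.Icc 1 (κ - 1), w j * ∏ i, (z i : ℂ) ^ ((t : ℤ) * a i j))
        ∂(Measure.pi fun _ : Fin m => rootsOfUnityMeasure κ))
      = ∑ ξ ∈ Finset.univ.filter
          (fun ξ : Fin n → Fin κ => ∀ i, (∑ j, a i j * ((ξ j : ℕ) : ℤ)) % (κ : ℤ) = 0),
          ∏ j ∈ Finset.univ.filter (fun j => (ξ j : ℕ) ≠ 0), w j := by
  have hκ₀ : 0 < κ := by omega
  have : NeZero κ := ⟨hκ₀.ne'⟩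
  simp only [prod_one_add_sum_Icc_eq_sum hκ₀, Circle.coe_ne_zero, ne_eq, not_false_eq_true,
    implies_true]
  rw [integral_finsetSum _ fun ξ _ =>
    (integrable_prod_zpow_pi_rootsOfUnityMeasure κ _).const_mul _]
  simp_rw [integral_const_mul, integral_prod_zpow_pi_rootsOfUnityMeasure, mul_ite, mul_one,
    mul_zero, ← sum_filter, Int.dvd_iff_emod_eq_zero]
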